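/- Let A and B be nonempty finite separated sets of points in the plane such that A ∪ B is in general position. Then the relation <_B is a strict partial order on A (it is asymmetric and transitive), and two distinct points x, y ∈ A are incomparable in <_B if and only if the line through x and y intersects the convex hull of B. -/

import Mathlib

open scoped Classical

/-- Points in the plane. -/
abbrev Pt := ℝ × ℝ

/-- A finite planar point set is in general position if no three of its points are collinear. -/
def GenPos (P : Finset Pt) : Prop :=
  ∀ p ∈ P, ∀ q ∈ P, ∀ r ∈ P, p ≠ q → p ≠ r → q ≠ r → ¬ Collinear ℝ ({p, q, r} : Set Pt)

/-- Two closed segments cross: their intersection is a single point lying in the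
relative interior (open segment) of both. -/
def SegCross (s t : Pt × Pt) : Prop :=
  ∃ x : Pt, segment ℝ s.1 s.2 ∩ segment ℝ t.1 t.2 = {x} ∧
    x ∈ openSegment ℝ s.1 s.2 ∧ x ∈ openSegment ℝ t.1 t.2

/-- A crossing family of size `k` in `P`: `k` segments with endpoints in `P`, pairwise crossing. -/
def CrossingFamily (P : Finset Pt) (k : ℕ) : Prop :=
  ∃ F : Finset (Pt × Pt), F.card = k ∧ (∀ e ∈ F, e.1 ∈ P ∧ e.2 ∈ P) ∧
    ∀ e ∈ F, ∀ f ∈ F, e ≠ f → SegCross e f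

/-- A non-crossing family of size `m` in `P`. -/
def NonCrossingFamily (P : Finset Pt) (m : ℕ) : Prop :=
  ∃ P₁ P₂ P₃ P₄ : Finset Pt,
    P₁ ⊆ P ∧ P₂ ⊆ P ∧ P₃ ⊆ P ∧ P₄ ⊆ P ∧
    Disjoint P₁ P₂ ∧ Disjoint P₁ P₃ ∧ Disjoint P₁ P₄ ∧
    Disjoint P₂ P₃ ∧ Disjoint P₂ P₄ ∧ Disjoint P₃ P₄ ∧
    m ≤ P₁.card ∧ m ≤ P₂.card ∧ m ≤ P₃.card ∧ m ≤ P₄.card ∧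
    ∀ p₁ ∈ P₁, ∀ p₂ ∈ P₂, ∀ p₃ ∈ P₃, ∀ p₄ ∈ P₄,
      p₄ ∈ interior (convexHull ℝ ({p₁, p₂, p₃} : Set Pt))

/-- A point set is in convex position if no point lies in the convex hull of the others. -/
def ConvexPos (S : Set Pt) : Prop := ∀ p ∈ S, p ∉ convexHull ℝ (S \ {p})

/-- A convex bundle of size `k` and width `m` in `P`. -/
def ConvexBundle (P : Finset Pt) (k m : ℕ) : Prop :=
  ∃ C : Fin k → Finset Pt, (∀ i, C i ⊆ P) ∧
    (∀ i j, i ≠ j → Disjoint (C i) (C j)) ∧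
    (∀ i, m ≤ (C i).card) ∧
    ∀ f : Fin k → Pt, (∀ i, f i ∈ C i) → ConvexPos (Set.range f)

/-- Two finite point sets are separated if their convex hulls are disjoint. -/
def Separated (A B : Finset Pt) : Prop :=
  Disjoint (convexHull ℝ (A : Set Pt)) (convexHull ℝ (B : Set Pt))

/-- A line in the plane, given by an equation `a * x + b * y = c` with `(a, b) ≠ (0, 0)`. -/
structure Line where
  a : ℝ
  b : ℝ
  c : ℝ
  nondeg : a ≠ 0 ∨ b ≠ 0

/-- The set of points of a line. -/
def Line.toSet (L : Line) : Set Pt := {x | L.a * x.1 + L.b * x.2 = L.c}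

/-- Two lines are parallel if their normal vectors are proportional. -/
def Line.Parallel (L M : Line) : Prop := L.a * M.b - L.b * M.a = 0

/-- A spoke set of size `k` in `P`: `k` pairwise non-parallel lines such that every unbounded
cell of their arrangement (unbounded connected component of the complement of their union)
contains a point of `P`. -/
def SpokeSet (P : Finset Pt) (k : ℕ) : Prop :=
  ∃ ℓ : Fin k → Line,
    (∀ i j, i ≠ j → ¬ (ℓ i).Parallel (ℓ j)) ∧
    ∀ x : Pt, x ∈ (⋃ i, (ℓ i).toSet)ᶜ →
      ¬ Bornology.IsBounded (connectedComponentIn (⋃ i, (ℓ i).toSet)ᶜ x) →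
      ∃ p ∈ P, p ∈ connectedComponentIn (⋃ i, (ℓ i).toSet)ᶜ x

/-- `b` lies strictly to the left of the line through `x` and `y`, oriented from `x` to `y`. -/
def LeftOf (x y b : Pt) : Prop :=
  0 < (y.1 - x.1) * (b.2 - x.2) - (y.2 - x.2) * (b.1 - x.1)

/-- The relation `<_B`: `x <_B y` iff `B` is contained in the open half-plane to the left of
the line through `x` and `y` oriented from `x` towards `y`. -/
def LtRel (B : Finset Pt) (x y : Pt) : Prop :=
  x ≠ y ∧ ∀ b ∈ B, LeftOf x y b

/-- `x` and `y` are incomparable in `<_B`. -/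
def Incomp (B : Finset Pt) (x y : Pt) : Prop := ¬ LtRel B x y ∧ ¬ LtRel B y x

/-- `ι(A, <_B)`: the number of unordered pairs of distinct points of `A`
that are incomparable in `<_B`. -/
noncomputable def iota (A B : Finset Pt) : ℕ :=
  Set.ncard {s : Finset Pt | ∃ x y : Pt, x ≠ y ∧ s = {x, y} ∧ x ∈ A ∧ y ∈ A ∧ Incomp B x y}

/-- `A` and `B` (two `m`-element sets) form an `ε`-avoiding pair. -/
def EpsAvoiding (ε : ℝ) (m : ℕ) (A B : Finset Pt) : Prop :=
  ((iota A B : ℝ) + (iota B A : ℝ)) ≤ ε * (m : ℝ) ^ 2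

/-- The zone of a line `ℓ` in the arrangement of the lines `ℓs`: the union of all cells
(connected components of the complement) whose closure meets `ℓ`. -/
noncomputable def Zone (r : ℕ) (ℓs : Fin r → Line) (ℓ : Line) : Set Pt :=
  {y | ∃ x ∈ (⋃ i, (ℓs i).toSet)ᶜ,
    y ∈ connectedComponentIn (⋃ i, (ℓs i).toSet)ᶜ x ∧
    (closure (connectedComponentIn (⋃ i, (ℓs i).toSet)ᶜ x) ∩ ℓ.toSet).Nonempty}

/-!
Everything is governed by the orientation determinant `orient x y p`, which is affine in `p`
and antisymmetric in `x, y`; antisymmetry gives asymmetry of `<_B`. For transitivity, if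
`x <_B y <_B z` but some `b ∈ B` is not strictly left of `xz`, then the barycentric coordinates
of `b` with respect to `x, y, z` are nonnegative, so `b` lies in the triangle `xyz ⊆ conv A`,
contradicting separation. If `x, y` are incomparable, general position puts points of `B`
strictly on both sides of the line `xy`, and the intermediate value theorem on the connected set
`conv B` gives a point of the line in `conv B`. Conversely, an open half-plane is convex, so it
cannot contain `conv B` once the line meets `conv B`.
-/

def orient (x y p : Pt) : ℝ := (y.1 - x.1) * (p.2 - x.2) - (y.2 - x.2) * (p.1 - x.1)

lemma orient_swap (x y p : Pt) : orient y x p = -orient x y p := by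
  unfold orient; ring

lemma orient_add_orient_add_orient (x y z p : Pt) :
    orient y z p + orient z x p + orient x y p = orient x y z := by
  unfold orient; ring

lemma orient_smul_eq (x y z p : Pt) :
    orient x y z • p = orient y z p • x + orient z x p • y + orient x y p • z := by
  ext <;> simp only [orient, Prod.smul_fst, Prod.smul_snd, Prod.fst_add, Prod.snd_add,
    smul_eq_mul] <;> ring

lemma continuous_orient (x y : Pt) : Continuous (orient x y) := by
  unfold orient; fun_prop

lemma convex_setOf_orient_pos (x y : Pt) : Convex ℝ {p | 0 < orient x y p} := by
  intro p hp q hq a b ha hb hab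
  have hcomb : orient x y (a • p + b • q) = a * orient x y p + b * orient x y q := by
    simp only [orient, Prod.smul_fst, Prod.smul_snd, Prod.fst_add, Prod.snd_add, smul_eq_mul]
    linear_combination ((y.1 - x.1) * x.2 - (y.2 - x.2) * x.1) * hab
  simp only [Set.mem_ofPred_eq, hcomb] at hp hq ⊢
  have hmin := lt_min hp hq
  nlinarith [mul_le_mul_of_nonneg_left (min_le_left (orient x y p) (orient x y q)) ha,
    mul_le_mul_of_nonneg_left (min_le_right (orient x y p) (orient x y q)) hb]

lemma mem_affineSpan_pair_iff_orient_eq_zero {x y : Pt} (hxy : x ≠ y) (p : Pt) :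
    p ∈ line[ℝ, x, y] ↔ orient x y p = 0 := by
  rw [mem_affineSpan_pair_iff_exists_lineMap_eq]
  constructor
  · rintro ⟨r, rfl⟩
    simp only [orient, AffineMap.lineMap_apply_module', Prod.smul_fst, Prod.smul_snd,
      Prod.fst_add, Prod.snd_add, Prod.fst_sub, Prod.snd_sub, smul_eq_mul]
    ring
  · intro h
    have hd : (y.1 - x.1) ^ 2 + (y.2 - x.2) ^ 2 ≠ 0 := by
      intro h0
      apply hxy
      ext <;> nlinarith [sq_nonneg (y.1 - x.1), sq_nonneg (y.2 - x.2)]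
    -- the parameter of the orthogonal projection of `p` onto the line
    refine ⟨((p.1 - x.1) * (y.1 - x.1) + (p.2 - x.2) * (y.2 - x.2)) /
      ((y.1 - x.1) ^ 2 + (y.2 - x.2) ^ 2), ?_⟩
    simp only [orient] at h
    ext <;> simp only [AffineMap.lineMap_apply_module', Prod.smul_fst, Prod.smul_snd,
      Prod.fst_add, Prod.snd_add, Prod.fst_sub, Prod.snd_sub, smul_eq_mul] <;> field_simp
    · linear_combination (y.2 - x.2) * h
    · linear_combination -(y.1 - x.1) * h

lemma smul_add_smul_add_smul_mem_convexHull {E : Type*} [AddCommGroup E] [Module ℝ E]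
    {x y z : E} {a b c : ℝ} (ha : 0 ≤ a) (hb : 0 ≤ b) (hc : 0 ≤ c) (habc : a + b + c = 1) :
    a • x + b • y + c • z ∈ convexHull ℝ ({x, y, z} : Set E) := by
  have h := (convex_convexHull ℝ ({x, y, z} : Set E)).sum_mem (t := Finset.univ)
    (w := ![a, b, c]) (z := ![x, y, z]) (by simp [Fin.forall_fin_succ, ha, hb, hc])
    (by simp [Fin.sum_univ_three, habc])
    (fun i _ => subset_convexHull ℝ _ (by fin_cases i <;> simp))
  simpa [Fin.sum_univ_three] using h

lemma mem_convexHull_triple_of_orient_nonneg {x y z p : Pt} (hx : 0 ≤ orient y z p)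
    (hy : 0 ≤ orient z x p) (hz : 0 ≤ orient x y p) (hT : 0 < orient x y z) :
    p ∈ convexHull ℝ ({x, y, z} : Set Pt) := by
  have hp : p = (orient y z p / orient x y z) • x + (orient z x p / orient x y z) • y +
      (orient x y p / orient x y z) • z := by
    rw [div_eq_inv_mul, div_eq_inv_mul, div_eq_inv_mul, mul_smul, mul_smul, mul_smul,
      ← smul_add, ← smul_add, ← orient_smul_eq, inv_smul_smul₀ hT.ne']
  rw [hp]
  refine smul_add_smul_add_smul_mem_convexHull (by positivity) (by positivity) (by positivity) ?_
  rw [← add_div, ← add_div, orient_add_orient_add_orient, div_self hT.ne']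

lemma leftOf_iff_orient_pos {x y p : Pt} : LeftOf x y p ↔ 0 < orient x y p := Iff.rfl

section Separated

variable {A B : Finset Pt} {x y z : Pt}

lemma Separated.notMem_convexHull_left (sep : Separated A B) {b : Pt} (hb : b ∈ B) :
    b ∉ convexHull ℝ (A : Set Pt) :=
  Set.disjoint_right.mp sep (subset_convexHull ℝ _ hb)

lemma orient_ne_zero_of_genPos (sep : Separated A B) (gp : GenPos (A ∪ B)) (hx : x ∈ A)
    (hy : y ∈ A) (hxy : x ≠ y) {b : Pt} (hb : b ∈ B) : orient x y b ≠ 0 := by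
  intro h0
  have hbA : b ∉ A := fun h => sep.notMem_convexHull_left hb (subset_convexHull ℝ _ h)
  exact gp b (Finset.mem_union_right _ hb) x (Finset.mem_union_left _ hx)
    y (Finset.mem_union_left _ hy) (fun h => hbA (h ▸ hx)) (fun h => hbA (h ▸ hy)) hxy
    (collinear_insert_of_mem_affineSpan_pair
      ((mem_affineSpan_pair_iff_orient_eq_zero hxy b).2 h0))

lemma LtRel.not_ltRel (hB : B.Nonempty) (h : LtRel B x y) : ¬ LtRel B y x := by
  rintro ⟨-, h'⟩
  obtain ⟨b, hb⟩ := hB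
  have hyx := h' b hb
  rw [leftOf_iff_orient_pos, orient_swap, neg_pos] at hyx
  exact hyx.not_gt (h.2 b hb)

lemma LtRel.trans (sep : Separated A B) (hB : B.Nonempty) (hx : x ∈ A) (hy : y ∈ A)
    (hz : z ∈ A) (hxy : LtRel B x y) (hyz : LtRel B y z) : LtRel B x z := by
  have hxz : x ≠ z := by
    rintro rfl
    exact hxy.not_ltRel hB hyz
  refine ⟨hxz, fun b hb => ?_⟩
  by_contra hxzb
  have h₁ : 0 < orient x y b := hxy.2 b hb
  have h₂ : 0 < orient y z b := hyz.2 b hb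
  have h₃ : 0 ≤ orient z x b := by
    rw [orient_swap]
    exact neg_nonneg.2 (not_lt.1 hxzb)
  have hT : 0 < orient x y z := by
    rw [← orient_add_orient_add_orient x y z b]
    linarith
  refine sep.notMem_convexHull_left hb
    (convexHull_mono ?_ (mem_convexHull_triple_of_orient_nonneg h₂.le h₃ h₁.le hT))
  simp [Set.insert_subset_iff, hx, hy, hz]

lemma exists_orient_neg_of_not_ltRel (hxy : x ≠ y) (hne : ∀ b ∈ B, orient x y b ≠ 0)
    (h : ¬ LtRel B x y) : ∃ b ∈ B, orient x y b < 0 := by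
  by_contra! hc
  exact h ⟨hxy, fun b hb => (hc b hb).lt_of_ne (hne b hb).symm⟩

lemma Incomp.affineSpan_inter_convexHull_nonempty (sep : Separated A B) (gp : GenPos (A ∪ B))
    (hx : x ∈ A) (hy : y ∈ A) (hxy : x ≠ y) (h : Incomp B x y) :
    ((line[ℝ, x, y] : Set Pt) ∩ convexHull ℝ (B : Set Pt)).Nonempty := by
  have hne : ∀ b ∈ B, orient x y b ≠ 0 := fun b hb =>
    orient_ne_zero_of_genPos sep gp hx hy hxy hb
  obtain ⟨b, hb, hneg⟩ := exists_orient_neg_of_not_ltRel hxy hne h.1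
  obtain ⟨b', hb', hpos⟩ := exists_orient_neg_of_not_ltRel hxy.symm
    (fun b hb => by rw [orient_swap, neg_ne_zero]; exact hne b hb) h.2
  rw [orient_swap, neg_lt_zero] at hpos
  obtain ⟨p, hp, hp0⟩ := (convex_convexHull ℝ (B : Set Pt)).isPreconnected.intermediate_value
    (subset_convexHull ℝ _ hb) (subset_convexHull ℝ _ hb') (continuous_orient x y).continuousOn
    ⟨hneg.le, hpos.le⟩
  exact ⟨p, (mem_affineSpan_pair_iff_orient_eq_zero hxy p).2 hp0, hp⟩

lemma not_ltRel_of_mem_affineSpan_pair (hxy : x ≠ y) {p : Pt} (hpl : p ∈ line[ℝ, x, y])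
    (hpB : p ∈ convexHull ℝ (B : Set Pt)) : ¬ LtRel B x y := by
  rintro ⟨-, h⟩
  have hp : 0 < orient x y p := convexHull_min h (convex_setOf_orient_pos x y) hpB
  exact hp.ne' ((mem_affineSpan_pair_iff_orient_eq_zero hxy p).1 hpl)

lemma incomp_of_affineSpan_inter_convexHull_nonempty (hxy : x ≠ y)
    (h : ((line[ℝ, x, y] : Set Pt) ∩ convexHull ℝ (B : Set Pt)).Nonempty) : Incomp B x y := by
  obtain ⟨p, hpl, hpB⟩ := h
  exact ⟨not_ltRel_of_mem_affineSpan_pair hxy hpl hpB,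
    not_ltRel_of_mem_affineSpan_pair hxy.symm (by rwa [Set.pair_comm]) hpB⟩

end Separated

/-- For nonempty finite separated sets `A`, `B` with `A ∪ B` in general position,
`<_B` is a strict partial order on `A` (asymmetric and transitive), and two distinct points
`x, y ∈ A` are incomparable in `<_B` iff the line through `x` and `y` meets `conv(B)`. -/
theorem stmt10 :
    ∀ A B : Finset Pt, A.Nonempty → B.Nonempty → Separated A B → GenPos (A ∪ B) →
      (∀ x ∈ A, ∀ y ∈ A, LtRel B x y → ¬ LtRel B y x) ∧
      (∀ x ∈ A, ∀ y ∈ A, ∀ z ∈ A, LtRel B x y → LtRel B y z → LtRel B x z) ∧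
      (∀ x ∈ A, ∀ y ∈ A, x ≠ y →
        (Incomp B x y ↔
          ((affineSpan ℝ ({x, y} : Set Pt) : Set Pt) ∩ convexHull ℝ (B : Set Pt)).Nonempty)) := by
  intro A B _ hB sep gp
  exact ⟨fun x _ y _ h => h.not_ltRel hB,
    fun x hx y hy z hz => LtRel.trans sep hB hx hy hz,
    fun x hx y hy hxy => ⟨Incomp.affineSpan_inter_convexHull_nonempty sep gp hx hy hxy,
      incomp_of_affineSpan_inter_convexHull_nonempty hxy⟩⟩
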